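/- Let w be an infinite word whose privileged complexity satisfies A_n(w) = 1 for all even n ≥ 0 and A_n(w) = 2 for all odd n ≥ 1. Then w is aperiodic. -/

import Mathlib

/-- Number of occurrences of `u` as a factor of `w` (positions are 0-indexed). -/
noncomputable def occCount {A : Type*} (u w : List A) : ℕ :=
  Set.ncard {i : ℕ | i + u.length ≤ w.length ∧ (w.drop i).take u.length = u}

/-- `v` is a complete first return to `u`: `u` is a prefix and a suffix of `v`,
and `u` has exactly two occurrences in `v`. -/
def IsCompleteFirstReturn {A : Type*} (v u : List A) : Prop :=
  u <+: v ∧ u <:+ v ∧ occCount u v = 2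

/-- Privileged words: the empty word and the single letters are privileged, and a word of
length at least 2 is privileged if it is a complete first return to a shorter privileged word. -/
inductive Privileged {A : Type*} : List A → Prop where
  | nil : Privileged ([] : List A)
  | single (a : A) : Privileged [a]
  | ret (w u : List A) : 2 ≤ w.length → u.length < w.length → Privileged u →
      IsCompleteFirstReturn w u → Privileged w

/-- A complete return word: a complete first return to some word
(the empty word counted by convention; letters are complete first returns to the empty word). -/
def IsCompleteReturnWord {A : Type*} (v : List A) : Prop :=
  v = [] ∨ ∃ u : List A, IsCompleteFirstReturn v u

/-- Position `i` of `w` (1-based, `1 ≤ i ≤ |w|`) introduces the factor `u`: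
`u` occurs in `w` ending at position `i` and `u` occurs exactly once in the prefix `w[1,i]`. -/
def Introduces {A : Type*} (w : List A) (i : ℕ) (u : List A) : Prop :=
  1 ≤ i ∧ i ≤ w.length ∧ u <:+ w.take i ∧ occCount u (w.take i) = 1

/-- A finite word is rich if it has exactly `|w| + 1` distinct palindromic factors. -/
noncomputable def RichWord {A : Type*} (w : List A) : Prop :=
  Set.ncard {u : List A | u <:+: w ∧ u.reverse = u} = w.length + 1

/-- `u` is a (finite) factor of the infinite word `w`. -/
def IsFactorInf {A : Type*} (w : ℕ → A) (u : List A) : Prop :=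
  ∃ i : ℕ, u = (List.range u.length).map fun k => w (i + k)

/-- A Q-property of finite words. -/
structure IsQProperty {A : Type*} (Q : List A → Prop) : Prop where
  q_nil : Q []
  q_single : ∀ a : A, Q [a]
  ends_at_every_position : ∀ (w : List A) (i : ℕ), 1 ≤ i → i ≤ w.length →
    ∃ u : List A, u ≠ [] ∧ u <:+ w.take i ∧ Q u
  introduces_at_most_one : ∀ (w : List A) (i : ℕ) (u v : List A),
    Introduces w i u → Introduces w i v → Q u → Q v → u = v

/-- Q-complexity of an infinite word: the number of distinct factors of length `n`
having property `Q`. -/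
noncomputable def qComplexityInf {A : Type*} (w : ℕ → A) (Q : List A → Prop) (n : ℕ) : ℕ :=
  Set.ncard {u : List A | IsFactorInf w u ∧ Q u ∧ u.length = n}

/-- Privileged complexity of an infinite word. -/
noncomputable def privComplexityInf {A : Type*} (w : ℕ → A) (n : ℕ) : ℕ :=
  Set.ncard {u : List A | IsFactorInf w u ∧ Privileged u ∧ u.length = n}

/-- Palindromic complexity of an infinite word. -/
noncomputable def palComplexityInf {A : Type*} (w : ℕ → A) (n : ℕ) : ℕ :=
  Set.ncard {u : List A | IsFactorInf w u ∧ u.reverse = u ∧ u.length = n}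

/-- An infinite word is ultimately periodic if it is of the form `u v v v ⋯`
with `v` nonempty. -/
def UltimatelyPeriodic {A : Type*} (w : ℕ → A) : Prop :=
  ∃ u v : List A, v ≠ [] ∧ ∀ n : ℕ, w n =
    if n < u.length then u.getD n (w 0)
    else v.getD ((n - u.length) % v.length) (w 0)

/-- An infinite word is Sturmian if it has exactly `n + 1` distinct factors of
length `n` for every `n`. -/
def Sturmian {A : Type*} (w : ℕ → A) : Prop :=
  ∀ n : ℕ, Set.ncard {u : List A | IsFactorInf w u ∧ u.length = n} = n + 1

/-- A finite binary word is balanced: its set of factors is balanced. -/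
def BalancedWord (x : List Bool) : Prop :=
  ∀ u v : List Bool, u <:+: x → v <:+: x → u.length = v.length →
    ((u.count true : ℤ) - (v.count true : ℤ)).natAbs ≤ 1

/-- `u` is a right special factor of the infinite word `w`. -/
def RightSpecial {A : Type*} (w : ℕ → A) (u : List A) : Prop :=
  ∃ a b : A, a ≠ b ∧ IsFactorInf w (u ++ [a]) ∧ IsFactorInf w (u ++ [b])

/-- The Thue-Morse word: the `n`-th letter is the parity of the number of ones in the
binary expansion of `n` (`false` = 0, `true` = 1). -/
def thueMorse (n : ℕ) : Bool := (Nat.digits 2 n).count 1 % 2 == 1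

/-!
If `w = z t t t ⋯`, every factor of `w` has an occurrence starting before `K = |z| + |t|`, so a
factor of length at most `L` is completed for the first time at a position below `K + L`. Two
distinct privileged factors are never first completed at the same position: the shorter one would
be a suffix, hence (being privileged) also a prefix, of the longer one, and so would have occurred
earlier. Thus `w` has at most `K + L` privileged factors of length at most `L`, while the assumed
privileged complexity gives `3K + 1` of them for `L = 2K`.
-/

section Occurrences

variable {A : Type*}

def OccursAt (u v : List A) (i : ℕ) : Prop :=
  ∃ s t, s ++ u ++ t = v ∧ s.length = i

theorem occursAt_iff {u v : List A} {i : ℕ} :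
    OccursAt u v i ↔ i + u.length ≤ v.length ∧ (v.drop i).take u.length = u := by
  constructor
  · rintro ⟨s, t, rfl, rfl⟩
    simp
  · rintro ⟨hle, htake⟩
    refine ⟨v.take i, v.drop (i + u.length), ?_, by simp; omega⟩
    conv_rhs => rw [← v.take_append_drop i, ← (v.drop i).take_append_drop u.length]
    rw [htake, List.drop_drop, List.append_assoc]

theorem occCount_eq_ncard (u v : List A) : occCount u v = {i | OccursAt u v i}.ncard := by
  simp only [occCount, occursAt_iff]

theorem occursAt_nil {v : List A} {i : ℕ} (hi : i ≤ v.length) : OccursAt [] v i :=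
  ⟨v.take i, v.drop i, by simp, by simp [hi]⟩

theorem List.IsPrefix.occursAt_zero {u v : List A} (h : u <+: v) : OccursAt u v 0 :=
  let ⟨t, ht⟩ := h
  ⟨[], t, by simpa using ht, rfl⟩

theorem List.IsSuffix.occursAt {u v : List A} (h : u <:+ v) :
    OccursAt u v (v.length - u.length) := by
  obtain ⟨s, rfl⟩ := h
  exact ⟨s, [], by simp, by simp⟩

theorem OccursAt.trans {u v x : List A} {i j : ℕ} (huv : OccursAt u v j) (hvx : OccursAt v x i) :
    OccursAt u x (i + j) := by
  obtain ⟨s, t, rfl, rfl⟩ := huv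
  obtain ⟨s', t', rfl, rfl⟩ := hvx
  exact ⟨s' ++ s, t ++ t', by simp, by simp⟩

end Occurrences

namespace IsCompleteFirstReturn

variable {A : Type*} {u v : List A}

theorem occursAt_eq (h : IsCompleteFirstReturn v u) (hlt : u.length < v.length) {i : ℕ}
    (hi : OccursAt u v i) : i = 0 ∨ i = v.length - u.length := by
  obtain ⟨hpre, hsuf, hcount⟩ := h
  rw [occCount_eq_ncard, Set.ncard_eq_two] at hcount
  obtain ⟨a, b, -, hab⟩ := hcount
  have h0 : 0 ∈ {i | OccursAt u v i} := hpre.occursAt_zero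
  have h1 : v.length - u.length ∈ {i | OccursAt u v i} := hsuf.occursAt
  have hi' : i ∈ {i | OccursAt u v i} := hi
  rw [hab] at h0 h1 hi'
  simp only [Set.mem_insert_iff, Set.mem_singleton_iff] at h0 h1 hi'
  omega

theorem length_pos (h : IsCompleteFirstReturn v u) (hv : 2 ≤ v.length)
    (hlt : u.length < v.length) : 0 < u.length := by
  by_contra hu
  obtain rfl : u = [] := List.eq_nil_of_length_eq_zero (by omega)
  have := h.occursAt_eq hlt (occursAt_nil (i := 1) (by omega))
  simp only [List.length_nil, Nat.sub_zero] at this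
  omega

end IsCompleteFirstReturn

theorem Privileged.isPrefix_of_isSuffix {A : Type*} {v : List A} (hv : Privileged v) :
    ∀ {u : List A}, Privileged u → u <:+ v → u <+: v := by
  induction hv with
  | nil => intro u _ hsuf; simp [List.suffix_nil.mp hsuf]
  | single a =>
    intro u _ hsuf
    rcases hsuf.length_le.eq_or_lt with heq | hlt
    · exact hsuf.eq_of_length heq ▸ List.prefix_refl _
    · simp [List.length_eq_zero_iff.mp (by simpa using hlt)]
  | ret v b hv2 hbv _ hret ih =>
    intro u hu hsuf
    rcases hsuf.length_le.eq_or_lt with heq | huv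
    · exact hsuf.eq_of_length heq ▸ List.prefix_refl _
    rcases le_or_gt u.length b.length with hub | hbu
    · exact (ih hu (List.suffix_of_suffix_length_le hsuf hret.2.1 hub)).trans hret.1
    exfalso
    have hb := hret.length_pos hv2 hbv
    cases hu with
    | nil => simp at hbu
    | single a => rw [List.length_singleton] at hbu; omega
    | ret u c _ hcu hc hret' =>
      have hcv : c <:+ v := hret'.2.1.trans hsuf
      rcases le_or_gt b.length c.length with hbc | hcb
      · -- `b` would occur inside the prefix `c` of `u`, strictly between its occurrences in `v`
        have hocc := (List.suffix_of_suffix_length_le hret.2.1 hcv hbc).occursAt.trans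
          (hret'.1.occursAt_zero.trans hsuf.occursAt)
        have := hret.occursAt_eq hbv hocc
        omega
      · have hcb' : c <+: b := ih hc (List.suffix_of_suffix_length_le hcv hret.2.1 hcb.le)
        have hocc := hcb'.occursAt_zero.trans
          (List.suffix_of_suffix_length_le hret.2.1 hsuf hbu.le).occursAt
        have := hret'.occursAt_eq hcu hocc
        omega

section InfiniteWords

variable {A : Type*} (w : ℕ → A)

def wordPrefix (n : ℕ) : List A := (List.range n).map w

theorem length_wordPrefix (n : ℕ) : (wordPrefix w n).length = n := by
  simp [wordPrefix]

theorem take_wordPrefix {m n : ℕ} (h : m ≤ n) : (wordPrefix w n).take m = wordPrefix w m := by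
  simp only [wordPrefix, ← List.map_take, List.take_range, Nat.min_eq_left h]

theorem isSuffix_wordPrefix_of_eq_map {u : List A} {i : ℕ}
    (hu : u = (List.range u.length).map fun k => w (i + k)) :
    u <:+ wordPrefix w (i + u.length) := by
  refine ⟨wordPrefix w i, ?_⟩
  rw [wordPrefix, wordPrefix, List.range_add, List.map_append, List.map_map, hu]
  simp

theorem List.IsPrefix.isSuffix_wordPrefix {u v : List A} {n : ℕ} (huv : u <+: v)
    (hv : v <:+ wordPrefix w n) : u <:+ wordPrefix w (n - v.length + u.length) := by
  obtain ⟨s, hs⟩ := hv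
  obtain ⟨t, rfl⟩ := huv
  have hn := congrArg List.length hs
  simp only [List.length_append, length_wordPrefix] at hn
  have hsu : s ++ u = (wordPrefix w n).take (s ++ u).length := by
    rw [← hs, ← List.append_assoc, List.take_left]
  refine ⟨s, ?_⟩
  rw [hsu, take_wordPrefix w (by simp; omega)]
  congr 1
  simp only [List.length_append]
  omega

/-- The position introducing `u` in the sense of `Introduces`; `0` if `u` is not a factor. -/
noncomputable def firstEnd (u : List A) : ℕ := sInf {n | u <:+ wordPrefix w n}

variable {w}

theorem firstEnd_le {u : List A} {n : ℕ} (h : u <:+ wordPrefix w n) : firstEnd w u ≤ n :=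
  Nat.sInf_le h

theorem IsFactorInf.isSuffix_wordPrefix_firstEnd {u : List A} (hu : IsFactorInf w u) :
    u <:+ wordPrefix w (firstEnd w u) :=
  let ⟨_, hi⟩ := hu
  Nat.sInf_mem (s := {n | u <:+ wordPrefix w n}) ⟨_, isSuffix_wordPrefix_of_eq_map w hi⟩

theorem firstEnd_injOn : Set.InjOn (firstEnd w) {u | IsFactorInf w u ∧ Privileged u} := by
  rintro u ⟨hu, hpu⟩ v ⟨hv, hpv⟩ heq
  wlog hle : u.length ≤ v.length generalizing u v
  · exact (this hv hpv hu hpu heq.symm (le_of_not_ge hle)).symm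
  have hvs := hv.isSuffix_wordPrefix_firstEnd
  have hus : u <:+ wordPrefix w (firstEnd w v) := heq ▸ hu.isSuffix_wordPrefix_firstEnd
  have huv : u <+: v := hpv.isPrefix_of_isSuffix hpu (List.suffix_of_suffix_length_le hus hvs hle)
  have hearlier := firstEnd_le (huv.isSuffix_wordPrefix w hvs)
  have hvlen := hvs.length_le
  rw [length_wordPrefix] at hvlen
  exact huv.eq_of_length (by omega)

theorem sum_privComplexityInf_le {K : ℕ}
    (hK : ∀ u, IsFactorInf w u → ∃ i < K, u = (List.range u.length).map fun k => w (i + k))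
    (L : ℕ) : ∑ n ∈ Finset.range (L + 1), privComplexityInf w n ≤ K + L := by
  set F := {u | IsFactorInf w u ∧ Privileged u ∧ u.length ≤ L}
  have hmaps : Set.MapsTo (firstEnd w) F (Set.Iio (K + L)) := by
    rintro u ⟨hu, -, hlen⟩
    obtain ⟨i, hiK, hi⟩ := hK u hu
    have := firstEnd_le (isSuffix_wordPrefix_of_eq_map w hi)
    simp only [Set.mem_Iio]
    omega
  have hinj : Set.InjOn (firstEnd w) F :=
    firstEnd_injOn.mono fun _ hu => And.intro hu.1 hu.2.1
  have hfin : F.Finite := Set.Finite.of_injOn hmaps hinj (Set.finite_Iio _)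
  have hsum : F.ncard = ∑ n ∈ Finset.range (L + 1), privComplexityInf w n := by
    rw [← hfin.coe_toFinset, Set.ncard_coe_finset,
      Finset.card_eq_sum_card_fiberwise (f := List.length) (t := Finset.range (L + 1))]
    · refine Finset.sum_congr rfl fun n hn => ?_
      rw [privComplexityInf, ← Set.ncard_coe_finset]
      congr 1
      ext u
      simp only [Finset.coe_filter, Set.Finite.mem_toFinset, Set.mem_ofPred_eq, F]
      have := Finset.mem_range.mp hn
      constructor
      · exact fun ⟨⟨hu, hp, _⟩, hlen⟩ => ⟨hu, hp, hlen⟩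
      · exact fun ⟨hu, hp, hlen⟩ => ⟨⟨hu, hp, by omega⟩, hlen⟩
    · intro u hu
      simp only [Finset.coe_range, Set.mem_Iio, Set.Finite.coe_toFinset] at hu ⊢
      exact Nat.lt_succ_of_le hu.2.2
  calc ∑ n ∈ Finset.range (L + 1), privComplexityInf w n
      = F.ncard := hsum.symm
    _ ≤ (Set.Iio (K + L)).ncard := Set.ncard_le_ncard_of_injOn _ hmaps hinj (Set.finite_Iio _)
    _ = K + L := Set.ncard_Iio_nat _

theorem UltimatelyPeriodic.exists_periodic_shift (hw : UltimatelyPeriodic w) :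
    ∃ N p, 0 < p ∧ Function.Periodic (fun m => w (N + m)) p := by
  obtain ⟨z, t, ht, hw⟩ := hw
  refine ⟨z.length, t.length, List.length_pos_iff.mpr ht, fun m => ?_⟩
  dsimp only
  rw [hw (z.length + (m + t.length)), hw (z.length + m), if_neg (by omega), if_neg (by omega),
    Nat.add_sub_cancel_left, Nat.add_sub_cancel_left, Nat.add_mod_right]

theorem exists_occurrence_lt_of_periodic {N p : ℕ} (hp : 0 < p)
    (hper : Function.Periodic (fun m => w (N + m)) p) {u : List A} (hu : IsFactorInf w u) :
    ∃ i < N + p, u = (List.range u.length).map fun k => w (i + k) := by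
  obtain ⟨i, hi⟩ := hu
  by_cases hiN : i < N + p
  · exact ⟨i, hiN, hi⟩
  refine ⟨N + (i - N) % p, by have := Nat.mod_lt (i - N) hp; omega,
    hi.trans (List.map_congr_left fun k _ => ?_)⟩
  have hperk : Function.Periodic (fun m => w (N + m + k)) p := fun m => by
    simpa only [Nat.add_right_comm _ p k, Nat.add_assoc] using hper (m + k)
  rw [hperk.map_mod_nat (i - N)]
  congr 1
  omega

end InfiniteWords

theorem sum_range_ite_even (K : ℕ) :
    ∑ n ∈ Finset.range (2 * K + 1), (if Even n then 1 else 2) = 3 * K + 1 := by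
  induction K with
  | zero => simp
  | succ K ih =>
    rw [show 2 * (K + 1) + 1 = 2 * K + 1 + 1 + 1 by ring, Finset.sum_range_succ,
      Finset.sum_range_succ, ih]
    have hodd : ¬ Even (2 * K + 1) := Nat.not_even_two_mul_add_one K
    have heven : Even (2 * K + 1 + 1) := ⟨K + 1, by ring⟩
    rw [if_neg hodd, if_pos heven]
    ring

theorem jsp_implies_aperiodic_general {A : Type*} (w : ℕ → A)
    (h : ∀ n : ℕ, privComplexityInf w n = if Even n then 1 else 2) :
    ¬ UltimatelyPeriodic w := by
  intro hw
  obtain ⟨N, p, hp, hper⟩ := hw.exists_periodic_shift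
  have hbound := sum_privComplexityInf_le
    (fun _ hu => exists_occurrence_lt_of_periodic hp hper hu) (2 * (N + p))
  rw [Finset.sum_congr rfl fun n _ => h n, sum_range_ite_even] at hbound
  omega

/-- An infinite word whose privileged complexity is 1 for even lengths and
2 for odd lengths is aperiodic. -/
theorem jsp_implies_aperiodic {A : Type*} [Fintype A] (w : ℕ → A)
    (h : ∀ n : ℕ, privComplexityInf w n = if Even n then 1 else 2) :
    ¬ UltimatelyPeriodic w :=
  jsp_implies_aperiodic_general w h
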